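/- Let D be a divisor of nonnegative rank on a tropical curve Γ. Then D is very ample if and only if the reduced-divisor map P ↦ D_P is injective on Γ. -/

import Mathlib

open scoped Classical

/-- A combinatorial model of a metric graph: a finite multigraph with positive
edge lengths. -/
structure GraphModel where
  V : Type
  E : Type
  [fintV : Fintype V]
  [fintE : Fintype E]
  src : E → V
  tgt : E → V
  len : E → ℝ
  len_pos : ∀ e, 0 < len e

attribute [instance] GraphModel.fintV GraphModel.fintE

/-- A (compact, connected) tropical curve: a compact connected metric space `Γ`
which is the geometric realization of a finite multigraph with positive edge
lengths, equipped with the induced path metric.  Each edge `e` is realized by a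
parametrization `edge e : [0, len e] → Γ` joining its endpoints, injective on the
interior, the interiors of distinct edges are disjoint and avoid the vertices,
the edges and vertices cover `Γ`, and the metric is the associated path metric. -/
structure TropicalCurve where
  Γ : Type
  [met : MetricSpace Γ]
  [cpt : CompactSpace Γ]
  [conn : ConnectedSpace Γ]
  G : GraphModel
  vtx : G.V → Γ
  edge : G.E → ℝ → Γ
  vtx_inj : Function.Injective vtx
  edge_src : ∀ e, edge e 0 = vtx (G.src e)
  edge_tgt : ∀ e, edge e (G.len e) = vtx (G.tgt e)
  edge_inj : ∀ e, Set.InjOn (edge e) (Set.Ioo 0 (G.len e))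
  interior_disjoint : ∀ e e' t t', t ∈ Set.Ioo 0 (G.len e) → t' ∈ Set.Ioo 0 (G.len e') →
    edge e t = edge e' t' → e = e' ∧ t = t'
  interior_not_vtx : ∀ e t v, t ∈ Set.Ioo 0 (G.len e) → edge e t ≠ vtx v
  cover : ∀ x : Γ, (∃ v, x = vtx v) ∨ ∃ e t, t ∈ Set.Ioo 0 (G.len e) ∧ x = edge e t
  path_metric : ∀ x y : Γ, dist x y = sInf { d : ℝ | ∃ (n : ℕ) (p : ℕ → Γ) (δ : ℕ → ℝ),
    p 0 = x ∧ p n = y ∧ (∀ i < n, ∃ (e : G.E) (s t : ℝ), s ∈ Set.Icc 0 (G.len e) ∧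
      t ∈ Set.Icc 0 (G.len e) ∧ p i = edge e s ∧ p (i+1) = edge e t ∧ δ i = |s - t|) ∧
    d = ∑ i ∈ Finset.range n, δ i }

attribute [instance] TropicalCurve.met TropicalCurve.cpt TropicalCurve.conn

namespace TropicalCurve

variable (C : TropicalCurve)

/-- A divisor on a tropical curve: a finitely supported function `Γ → ℤ`. -/
abbrev Divisor := C.Γ →₀ ℤ

/-- A divisor is effective if all its coefficients are nonnegative. -/
def Effective (D : Divisor C) : Prop := ∀ v, 0 ≤ D v

/-- The degree of a divisor: the sum of its coefficients. -/
def deg (D : Divisor C) : ℤ := D.sum fun _ n => n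

/-- `f` has (outgoing) slope `m` to the right of the point with parameter `t₀`
on the edge `e`. -/
def HasSlopeR (f : C.Γ → ℝ) (e : C.G.E) (t₀ : ℝ) (m : ℤ) : Prop :=
  ∃ ε > 0, t₀ + ε ≤ C.G.len e ∧ ∀ s ∈ Set.Icc t₀ (t₀ + ε),
    f (C.edge e s) = f (C.edge e t₀) + m * (s - t₀)

/-- `f` has (outgoing) slope `m` to the left of the point with parameter `t₀`
on the edge `e`. -/
def HasSlopeL (f : C.Γ → ℝ) (e : C.G.E) (t₀ : ℝ) (m : ℤ) : Prop :=
  ∃ ε > 0, 0 ≤ t₀ - ε ∧ ∀ s ∈ Set.Icc (t₀ - ε) t₀,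
    f (C.edge e s) = f (C.edge e t₀) + m * (t₀ - s)

/-- The branches (outgoing directions) at a point `x` of a tropical curve.  A
branch is encoded by an edge `e`, a parameter `t` with `edge e t = x`, and a
Boolean : `true` for the rightward direction, `false` for the leftward one. -/
def IsBranchAt (b : C.G.E × ℝ × Bool) (x : C.Γ) : Prop :=
  C.edge b.1 b.2.1 = x ∧ b.2.1 ∈ Set.Icc 0 (C.G.len b.1) ∧
    (if b.2.2 then b.2.1 < C.G.len b.1 else 0 < b.2.1)

/-- `ord_f(x) = n` : the sum of the outgoing slopes of `f` over all branches
emanating from `x` equals `n`. -/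
def HasOrderAt (f : C.Γ → ℝ) (x : C.Γ) (n : ℤ) : Prop :=
  ∃ (S : Finset (C.G.E × ℝ × Bool)) (m : C.G.E × ℝ × Bool → ℤ),
    (∀ b, b ∈ S ↔ C.IsBranchAt b x) ∧
    (∀ b ∈ S, if b.2.2 then C.HasSlopeR f b.1 b.2.1 (m b)
      else C.HasSlopeL f b.1 b.2.1 (m b)) ∧
    n = ∑ b ∈ S, m b

/-- A rational function on a tropical curve: a continuous function which is
piecewise linear with integer slopes and finitely many linear pieces on every
edge. -/
def IsRational (f : C.Γ → ℝ) : Prop :=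
  Continuous f ∧ ∀ e : C.G.E, ∃ (n : ℕ) (t : ℕ → ℝ), 0 < n ∧ t 0 = 0 ∧ t n = C.G.len e ∧
    (∀ i < n, t i < t (i+1)) ∧
    ∀ i < n, ∃ (m : ℤ) (b : ℝ), ∀ s ∈ Set.Icc (t i) (t (i+1)),
      f (C.edge e s) = m * s + b

/-- Two divisors are linearly equivalent if their difference is the divisor of a
rational function: `D - D' = div(f)`. -/
def LinEquiv (D D' : Divisor C) : Prop :=
  ∃ f : C.Γ → ℝ, C.IsRational f ∧ ∀ x, C.HasOrderAt f x (D x - D' x)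

/-- `f ∈ R(D)` : `f` is a rational function with `D + div(f) ≥ 0`. -/
def InR (D : Divisor C) (f : C.Γ → ℝ) : Prop :=
  C.IsRational f ∧ ∃ E : Divisor C, C.Effective E ∧ ∀ x, C.HasOrderAt f x (E x - D x)

/-- The branch `b` at `v` leaves the set `X`: some initial punctured segment
along `b` stays in `Γ ∖ (X ∖ {v})`. -/
def BranchLeaving (X : Set C.Γ) (v : C.Γ) (b : C.G.E × ℝ × Bool) : Prop :=
  C.IsBranchAt b v ∧
    (if b.2.2 then ∃ ε > 0, b.2.1 + ε ≤ C.G.len b.1 ∧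
        ∀ s ∈ Set.Ioc b.2.1 (b.2.1 + ε), C.edge b.1 s ∈ X → C.edge b.1 s = v
      else ∃ ε > 0, 0 ≤ b.2.1 - ε ∧
        ∀ s ∈ Set.Ico (b.2.1 - ε) b.2.1, C.edge b.1 s ∈ X → C.edge b.1 s = v)

/-- `deg_X^out(v)` : the number of edges (branch directions) leaving `X` at `v`,
i.e. the maximal number of internally disjoint segments in `Γ ∖ (X ∖ {v})` with
an end at `v`. -/
noncomputable def outDeg (X : Set C.Γ) (v : C.Γ) : ℕ :=
  {b | C.BranchLeaving X v b}.ncard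

/-- The degree (valence) of a point: the number of branches of `Γ` at `v`. -/
noncomputable def pointDeg (v : C.Γ) : ℕ := C.outDeg {v} v

/-- `D` is `v₀`-reduced: its coefficients away from `v₀` are nonnegative, and
every closed connected subset `X ⊆ Γ` avoiding `v₀` has a non-saturated boundary
point, i.e. some `v ∈ ∂X` with `D(v) < deg_X^out(v)`. -/
def IsReduced (v₀ : C.Γ) (D : Divisor C) : Prop :=
  (∀ v, v ≠ v₀ → 0 ≤ D v) ∧
  ∀ X : Set C.Γ, IsClosed X → IsConnected X → v₀ ∉ X →
    ∃ v ∈ frontier X, D v < (C.outDeg X v : ℤ)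

/-- `D` is linearly equivalent to an effective divisor. -/
def EquivEffective (D : Divisor C) : Prop :=
  ∃ E : Divisor C, C.Effective E ∧ C.LinEquiv D E

/-- The rank of a divisor: the largest `r ≥ -1` such that for every effective
divisor `E` of degree `r`, `D - E` is linearly equivalent to an effective
divisor (`-1` when `D` itself is not equivalent to an effective divisor). -/
noncomputable def rank (D : Divisor C) : ℤ :=
  sSup {r : ℤ | -1 ≤ r ∧ ∀ E : Divisor C, C.Effective E → C.deg E = r →
    C.EquivEffective (D - E)}

/-- The genus of a tropical curve: its first Betti number, computed from any
model as `#E - #V + 1`. -/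
noncomputable def genus : ℤ :=
  (Fintype.card C.G.E : ℤ) - (Fintype.card C.G.V : ℤ) + 1

/-- `D` is very ample: the rational functions in `R(D)` separate the points
of `Γ`. -/
def VeryAmple (D : Divisor C) : Prop :=
  ∀ P Q : C.Γ, P ≠ Q → ∃ f g : C.Γ → ℝ, C.InR D f ∧ C.InR D g ∧ f P - g P ≠ f Q - g Q

/-- `D` is ample: some positive integer multiple of `D` is very ample. -/
def Ample (D : Divisor C) : Prop := ∃ m : ℕ, 0 < m ∧ C.VeryAmple (m • D)

end TropicalCurve

/-!
Everything rests on the maximum principle for reduced divisors: if `D` is `v`-reduced, `E` is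
effective and `div φ = E - D`, then `φ` is maximal at `v`.

If `D_P = D_Q = D'` and `D' - D = div h`, then for every `f ∈ R(D)` the function `f - h` has
divisor `E - D'` with `E` effective, so it is maximal both at `P` and at `Q`; hence
`f(P) - f(Q) = h(P) - h(Q)` is the same for all `f ∈ R(D)`, and `R(D)` does not separate `P`
and `Q`. Conversely, write `D_P = D + div h_P`; the maximum principle also shows that `D_P` is
effective, so `h_P ∈ R(D)`. If `h_P - h_Q` took the same value at `P` and `Q`, the maximum
principle at `Q` and at `P` would make it constant, whence `D_P = D_Q`.
-/

namespace TropicalCurve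

variable {C : TropicalCurve}

variable (C) in
lemma dist_edge_le (e : C.G.E) {s t : ℝ} (hs : s ∈ Set.Icc 0 (C.G.len e))
    (ht : t ∈ Set.Icc 0 (C.G.len e)) : dist (C.edge e s) (C.edge e t) ≤ |s - t| := by
  rw [C.path_metric]
  refine csInf_le ⟨0, ?_⟩ ⟨1, fun i => if i = 0 then C.edge e s else C.edge e t,
    fun _ => |s - t|, by simp, by simp, fun i hi => ?_, by simp⟩
  · rintro d ⟨n, p, δ, -, -, hseg, rfl⟩
    refine Finset.sum_nonneg fun i hi => ?_
    obtain ⟨_, _, _, -, -, -, -, hδ⟩ := hseg i (Finset.mem_range.mp hi)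
    exact hδ ▸ abs_nonneg _
  · obtain rfl : i = 0 := by omega
    exact ⟨e, s, t, hs, ht, by simp, by simp, rfl⟩

variable (C) in
lemma continuousOn_edge (e : C.G.E) : ContinuousOn (C.edge e) (Set.Icc 0 (C.G.len e)) :=
  (LipschitzOnWith.of_dist_le_mul (K := 1) fun s hs t ht => by
    simpa [Real.dist_eq] using C.dist_edge_le e hs ht).continuousOn

variable (C) in
lemma eq_of_edge_eq_of_mem_Ioo {e : C.G.E} {t t' : ℝ} (ht : t ∈ Set.Ioo 0 (C.G.len e))
    (ht' : t' ∈ Set.Icc 0 (C.G.len e)) (h : C.edge e t = C.edge e t') : t = t' := by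
  rcases ht'.1.eq_or_lt with rfl | h0
  · exact absurd (h.trans (C.edge_src e)) (C.interior_not_vtx e t _ ht)
  rcases ht'.2.eq_or_lt with rfl | h1
  · exact absurd (h.trans (C.edge_tgt e)) (C.interior_not_vtx e t _ ht)
  exact C.edge_inj e ht ⟨h0, h1⟩ h

lemma IsBranchAt.param_eq {e : C.G.E} {t t' : ℝ} {d : Bool} {x : C.Γ}
    (h : C.IsBranchAt (e, t, d) x) (h' : C.IsBranchAt (e, t', d) x) : t = t' := by
  obtain ⟨hx, ht, hd⟩ := h
  obtain ⟨hx', ht', hd'⟩ := h'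
  have hedge : C.edge e t = C.edge e t' := hx.trans hx'.symm
  by_cases hi : t ∈ Set.Ioo 0 (C.G.len e)
  · exact C.eq_of_edge_eq_of_mem_Ioo hi ht' hedge
  by_cases hi' : t' ∈ Set.Ioo 0 (C.G.len e)
  · exact (C.eq_of_edge_eq_of_mem_Ioo hi' ht hedge.symm).symm
  simp only [Set.mem_Ioo, not_and_or, not_lt] at hi hi'
  simp only [Set.mem_Icc] at ht ht'
  cases d <;> simp only [Bool.false_eq_true, ↓reduceIte] at hd hd' <;>
    rcases hi with hi | hi <;> rcases hi' with hi' | hi' <;> linarith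

variable (C) in
lemma finite_setOf_isBranchAt (x : C.Γ) : {b | C.IsBranchAt b x}.Finite := by
  refine Set.Finite.of_finite_image (f := fun b => (b.1, b.2.2)) (Set.toFinite _) ?_
  rintro ⟨e, t, d⟩ hb ⟨e', t', d'⟩ hb' hee
  obtain ⟨rfl, rfl⟩ := Prod.mk.inj hee
  rw [IsBranchAt.param_eq hb hb']

/-- The parameter, on the edge of the branch `b`, of the point at distance `s` from its base
point. -/
def branchParam {E : Type*} (b : E × ℝ × Bool) (s : ℝ) : ℝ :=
  if b.2.2 then b.2.1 + s else b.2.1 - s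

@[simp]
lemma branchParam_zero {E : Type*} (b : E × ℝ × Bool) : branchParam b 0 = b.2.1 := by
  simp [branchParam]

lemma branchParam_ne {E : Type*} (b : E × ℝ × Bool) {s : ℝ} (hs : s ≠ 0) :
    branchParam b s ≠ b.2.1 := by
  unfold branchParam; split <;> intro h <;> exact hs (by linarith)

lemma continuous_branchParam {E : Type*} (b : E × ℝ × Bool) : Continuous (branchParam b) := by
  unfold branchParam; split <;> fun_prop

lemma IsBranchAt.mem_Icc {b : C.G.E × ℝ × Bool} {x : C.Γ} (hb : C.IsBranchAt b x) :
    b.2.1 ∈ Set.Icc 0 (C.G.len b.1) := hb.2.1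

lemma IsBranchAt.exists_branchParam_mem_Ioo {b : C.G.E × ℝ × Bool} {x : C.Γ}
    (hb : C.IsBranchAt b x) :
    ∃ ε > 0, ∀ s ∈ Set.Ioc 0 ε, branchParam b s ∈ Set.Ioo 0 (C.G.len b.1) := by
  obtain ⟨e, t, d⟩ := b
  obtain ⟨-, ⟨h0, hl⟩, hd⟩ := hb
  cases d <;> simp only [Bool.false_eq_true, ↓reduceIte] at hd
  · exact ⟨t / 2, by linarith, fun s hs => by
      simp only [branchParam, Bool.false_eq_true, ↓reduceIte]
      constructor <;> linarith [hs.1, hs.2]⟩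
  · exact ⟨(C.G.len e - t) / 2, by linarith, fun s hs => by
      simp only [branchParam, ↓reduceIte]
      constructor <;> linarith [hs.1, hs.2]⟩

variable (C) in
def HasBranchSlope (f : C.Γ → ℝ) (b : C.G.E × ℝ × Bool) (m : ℤ) : Prop :=
  if b.2.2 then C.HasSlopeR f b.1 b.2.1 m else C.HasSlopeL f b.1 b.2.1 m

lemma hasBranchSlope_iff {f : C.Γ → ℝ} {b : C.G.E × ℝ × Bool} {m : ℤ}
    (ht : b.2.1 ∈ Set.Icc 0 (C.G.len b.1)) :
    C.HasBranchSlope f b m ↔ ∃ ε > 0, ∀ s ∈ Set.Icc 0 ε,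
      branchParam b s ∈ Set.Icc 0 (C.G.len b.1) ∧
        f (C.edge b.1 (branchParam b s)) = f (C.edge b.1 b.2.1) + m * s := by
  obtain ⟨e, t, d⟩ := b
  obtain ⟨h0, hl⟩ := ht
  cases d <;> simp only [HasBranchSlope, HasSlopeL, HasSlopeR, branchParam, Bool.false_eq_true,
    ↓reduceIte, Set.mem_Icc]
  · refine ⟨fun ⟨ε, hε, hε0, h⟩ => ⟨ε, hε, fun s hs => ⟨⟨by linarith, by linarith⟩, ?_⟩⟩,
      fun ⟨ε, hε, h⟩ => ⟨ε, hε, (h ε ⟨hε.le, le_rfl⟩).1.1, fun s hs => ?_⟩⟩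
    · simpa using h (t - s) ⟨by linarith, by linarith⟩
    · simpa using (h (t - s) ⟨by linarith, by linarith⟩).2
  · refine ⟨fun ⟨ε, hε, hεl, h⟩ => ⟨ε, hε, fun s hs => ⟨⟨by linarith, by linarith⟩, ?_⟩⟩,
      fun ⟨ε, hε, h⟩ => ⟨ε, hε, (h ε ⟨hε.le, le_rfl⟩).1.2, fun s hs => ?_⟩⟩
    · simpa using h (t + s) ⟨by linarith, by linarith⟩
    · simpa using (h (s - t) ⟨by linarith, by linarith⟩).2

lemma HasBranchSlope.unique {f : C.Γ → ℝ} {b : C.G.E × ℝ × Bool} {x : C.Γ} {m m' : ℤ}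
    (hb : C.IsBranchAt b x) (h : C.HasBranchSlope f b m) (h' : C.HasBranchSlope f b m') :
    m = m' := by
  obtain ⟨ε, hε, hf⟩ := (hasBranchSlope_iff hb.mem_Icc).1 h
  obtain ⟨ε', hε', hf'⟩ := (hasBranchSlope_iff hb.mem_Icc).1 h'
  have hδ : 0 < min ε ε' := lt_min hε hε'
  have := (hf _ ⟨hδ.le, min_le_left _ _⟩).2.symm.trans (hf' _ ⟨hδ.le, min_le_right _ _⟩).2
  exact_mod_cast mul_right_cancel₀ hδ.ne' (add_left_cancel this)

lemma HasBranchSlope.sub {f g : C.Γ → ℝ} {b : C.G.E × ℝ × Bool} {x : C.Γ} {m m' : ℤ}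
    (hb : C.IsBranchAt b x) (hf : C.HasBranchSlope f b m) (hg : C.HasBranchSlope g b m') :
    C.HasBranchSlope (f - g) b (m - m') := by
  obtain ⟨ε, hε, hf⟩ := (hasBranchSlope_iff hb.mem_Icc).1 hf
  obtain ⟨ε', hε', hg⟩ := (hasBranchSlope_iff hb.mem_Icc).1 hg
  refine (hasBranchSlope_iff hb.mem_Icc).2 ⟨min ε ε', lt_min hε hε', fun s hs => ?_⟩
  obtain ⟨hmem, hfs⟩ := hf s ⟨hs.1, hs.2.trans (min_le_left _ _)⟩
  obtain ⟨-, hgs⟩ := hg s ⟨hs.1, hs.2.trans (min_le_right _ _)⟩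
  refine ⟨hmem, ?_⟩
  simp only [Pi.sub_apply, hfs, hgs]
  push_cast
  ring

lemma hasBranchSlope_const (c : ℝ) {b : C.G.E × ℝ × Bool} {x : C.Γ} (hb : C.IsBranchAt b x) :
    C.HasBranchSlope (fun _ => c) b 0 := by
  obtain ⟨ε, hε, hin⟩ := hb.exists_branchParam_mem_Ioo
  refine (hasBranchSlope_iff hb.mem_Icc).2 ⟨ε, hε, fun s hs => ⟨?_, by simp⟩⟩
  rcases hs.1.eq_or_lt with rfl | hs0
  · simpa using hb.mem_Icc
  · exact Set.Ioo_subset_Icc_self (hin s ⟨hs0, hs.2⟩)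

lemma HasBranchSlope.nonpos_of_forall_le {f : C.Γ → ℝ} {b : C.G.E × ℝ × Bool} {x : C.Γ}
    {m : ℤ} (hb : C.IsBranchAt b x) (h : C.HasBranchSlope f b m) (hmax : ∀ y, f y ≤ f x) :
    m ≤ 0 := by
  obtain ⟨ε, hε, hf⟩ := (hasBranchSlope_iff hb.mem_Icc).1 h
  have hle := hmax (C.edge b.1 (branchParam b ε))
  rw [(hf ε ⟨hε.le, le_rfl⟩).2, hb.1] at hle
  have : (m : ℝ) ≤ 0 := nonpos_of_mul_nonpos_left (by linarith) hε
  exact_mod_cast this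

lemma BranchLeaving.exists_forall {X : Set C.Γ} {v : C.Γ} {b : C.G.E × ℝ × Bool}
    (h : C.BranchLeaving X v b) : ∃ ε > 0, ∀ s ∈ Set.Ioc 0 ε,
      C.edge b.1 (branchParam b s) ∈ X → C.edge b.1 (branchParam b s) = v := by
  obtain ⟨e, t, d⟩ := b
  obtain ⟨-, h⟩ := h
  cases d <;> simp only [branchParam, Bool.false_eq_true, ↓reduceIte] at h ⊢ <;>
    obtain ⟨ε, hε, -, h⟩ := h <;> refine ⟨ε, hε, fun s hs => h _ ⟨?_, ?_⟩⟩ <;>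
    linarith [hs.1, hs.2]

lemma HasBranchSlope.not_branchLeaving {φ : C.Γ → ℝ} {b : C.G.E × ℝ × Bool} {v : C.Γ}
    (hb : C.IsBranchAt b v) (h : C.HasBranchSlope φ b 0) :
    ¬ C.BranchLeaving (connectedComponentIn (φ ⁻¹' {φ v}) v) v b := by
  intro hleave
  obtain ⟨ε₁, hε₁, hφ⟩ := (hasBranchSlope_iff hb.mem_Icc).1 h
  obtain ⟨ε₂, hε₂, hout⟩ := hleave.exists_forall
  obtain ⟨ε₃, hε₃, hin⟩ := hb.exists_branchParam_mem_Ioo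
  set δ := min ε₁ (min ε₂ ε₃)
  have hδ : 0 < δ := lt_min hε₁ (lt_min hε₂ hε₃)
  have hδ₁ : δ ≤ ε₁ := min_le_left _ _
  have hδ₂ : δ ≤ ε₂ := (min_le_right _ _).trans (min_le_left _ _)
  have hδ₃ : δ ≤ ε₃ := (min_le_right _ _).trans (min_le_right _ _)
  let γ : ℝ → C.Γ := fun s => C.edge b.1 (branchParam b s)
  have hsegment : γ '' Set.Icc 0 δ ⊆ connectedComponentIn (φ ⁻¹' {φ v}) v := by
    refine IsPreconnected.subset_connectedComponentIn ?_ ⟨0, ⟨le_rfl, hδ.le⟩, by simp [γ, hb.1]⟩ ?_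
    · exact isPreconnected_Icc.image _ ((C.continuousOn_edge b.1).comp
        (continuous_branchParam b).continuousOn fun s hs => (hφ s ⟨hs.1, hs.2.trans hδ₁⟩).1)
    · rintro _ ⟨s, hs, rfl⟩
      simp [γ, (hφ s ⟨hs.1, hs.2.trans hδ₁⟩).2, hb.1]
  have hγδ : γ δ = v := hout δ ⟨hδ, hδ₂⟩ (hsegment ⟨δ, ⟨hδ.le, le_rfl⟩, rfl⟩)
  exact branchParam_ne b hδ.ne'
    (C.eq_of_edge_eq_of_mem_Ioo (hin δ ⟨hδ, hδ₃⟩) hb.mem_Icc (hγδ.trans hb.1.symm))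

lemma HasOrderAt.unique {f : C.Γ → ℝ} {x : C.Γ} {n n' : ℤ}
    (h : C.HasOrderAt f x n) (h' : C.HasOrderAt f x n') : n = n' := by
  obtain ⟨S, m, hS, hm, rfl⟩ := h
  obtain ⟨S', m', hS', hm', rfl⟩ := h'
  obtain rfl : S' = S := Finset.ext fun b => (hS' b).trans (hS b).symm
  exact Finset.sum_congr rfl fun b hb =>
    HasBranchSlope.unique ((hS b).1 hb) (hm b hb) (hm' b hb)

lemma HasOrderAt.sub {f g : C.Γ → ℝ} {x : C.Γ} {n n' : ℤ}
    (hf : C.HasOrderAt f x n) (hg : C.HasOrderAt g x n') : C.HasOrderAt (f - g) x (n - n') := by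
  obtain ⟨S, m, hS, hm, rfl⟩ := hf
  obtain ⟨S', m', hS', hm', rfl⟩ := hg
  obtain rfl : S' = S := Finset.ext fun b => (hS' b).trans (hS b).symm
  exact ⟨S', m - m', hS, fun b hb => HasBranchSlope.sub ((hS b).1 hb) (hm b hb) (hm' b hb),
    (Finset.sum_sub_distrib _ _).symm⟩

variable (C) in
lemma hasOrderAt_const (c : ℝ) (x : C.Γ) : C.HasOrderAt (fun _ => c) x 0 :=
  ⟨(C.finite_setOf_isBranchAt x).toFinset, 0, fun _ => Set.Finite.mem_toFinset _,
    fun _ hb => hasBranchSlope_const c ((C.finite_setOf_isBranchAt x).mem_toFinset.1 hb), by simp⟩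

lemma HasOrderAt.nonpos_of_forall_le {f : C.Γ → ℝ} {x : C.Γ} {n : ℤ}
    (h : C.HasOrderAt f x n) (hmax : ∀ y, f y ≤ f x) : n ≤ 0 := by
  obtain ⟨S, m, hS, hm, rfl⟩ := h
  exact Finset.sum_nonpos fun b hb =>
    HasBranchSlope.nonpos_of_forall_le ((hS b).1 hb) (hm b hb) hmax

lemma outDeg_eq_card_filter {S : Finset (C.G.E × ℝ × Bool)} {v : C.Γ}
    (hS : ∀ b, b ∈ S ↔ C.IsBranchAt b v) (X : Set C.Γ) :
    C.outDeg X v = (S.filter (C.BranchLeaving X v)).card := by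
  rw [outDeg, ← Set.ncard_coe_finset, Finset.coe_filter]
  congr 1
  ext b
  exact ⟨fun h => ⟨(hS b).2 h.1, h⟩, And.right⟩

/-- At a maximum point `v` of `φ`, every slope is `≤ 0`, and it is `≤ -1` along each branch
leaving the connected component of `v` in the maximum set. -/
lemma HasOrderAt.le_neg_outDeg {φ : C.Γ → ℝ} {v : C.Γ} {n : ℤ} (h : C.HasOrderAt φ v n)
    (hmax : ∀ y, φ y ≤ φ v) : n ≤ -C.outDeg (connectedComponentIn (φ ⁻¹' {φ v}) v) v := by
  obtain ⟨S, m, hS, hm, rfl⟩ := h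
  set X := connectedComponentIn (φ ⁻¹' {φ v}) v
  rw [outDeg_eq_card_filter hS, Finset.card_filter, Nat.cast_sum, ← Finset.sum_neg_distrib]
  refine Finset.sum_le_sum fun b hb => ?_
  have hslope : C.HasBranchSlope φ b (m b) := hm b hb
  have hle := HasBranchSlope.nonpos_of_forall_le ((hS b).1 hb) hslope hmax
  by_cases hleave : C.BranchLeaving X v b
  · have hne : m b ≠ 0 := fun h0 =>
      HasBranchSlope.not_branchLeaving ((hS b).1 hb) (h0 ▸ hslope) hleave
    simp only [hleave, if_true, Nat.cast_one]
    omega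
  · simpa [hleave] using hle

variable (C) in
def HasDivisor (f : C.Γ → ℝ) (D : Divisor C) : Prop := ∀ x, C.HasOrderAt f x (D x)

lemma HasDivisor.unique {f : C.Γ → ℝ} {D D' : Divisor C} (h : C.HasDivisor f D)
    (h' : C.HasDivisor f D') : D = D' :=
  Finsupp.ext fun x => (h x).unique (h' x)

lemma HasDivisor.sub {f g : C.Γ → ℝ} {D D' : Divisor C} (hf : C.HasDivisor f D)
    (hg : C.HasDivisor g D') : C.HasDivisor (f - g) (D - D') :=
  fun x => (hf x).sub (hg x)

variable (C) in
lemma hasDivisor_const (c : ℝ) : C.HasDivisor (fun _ => c) 0 := C.hasOrderAt_const c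

lemma HasDivisor.neg {f : C.Γ → ℝ} {D : Divisor C} (hf : C.HasDivisor f D) :
    C.HasDivisor (-f) (-D) := by
  convert (C.hasDivisor_const 0).sub hf using 1 <;> ext <;> simp

lemma linEquiv_iff {D D' : Divisor C} :
    C.LinEquiv D D' ↔ ∃ f, C.IsRational f ∧ C.HasDivisor f (D - D') := Iff.rfl

lemma inR_iff {D : Divisor C} {f : C.Γ → ℝ} :
    C.InR D f ↔ C.IsRational f ∧ ∃ E, C.Effective E ∧ C.HasDivisor f (E - D) := Iff.rfl

/-- Maximum principle. Otherwise the component `X` of the maximum set through a maximum point would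
avoid `v₀`, and at every boundary point `v` of `X` the slopes of `φ` would give
`E(v) - D(v) ≤ -deg_X^out(v)`, so `D` would be saturated along `∂X`. -/
theorem IsReduced.forall_le_of_hasDivisor {v₀ : C.Γ} {D E : Divisor C}
    (hred : C.IsReduced v₀ D) (hE : C.Effective E) {φ : C.Γ → ℝ} (hφ : Continuous φ)
    (hdiv : C.HasDivisor φ (E - D)) : ∀ x, φ x ≤ φ v₀ := by
  obtain ⟨w, -, hw⟩ := isCompact_univ.exists_isMaxOn Set.univ_nonempty hφ.continuousOn
  have hwmax : ∀ y, φ y ≤ φ w := fun y => hw (Set.mem_univ y)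
  suffices hv₀ : φ v₀ = φ w from fun x => hv₀ ▸ hwmax x
  by_contra hv₀
  set X := connectedComponentIn (φ ⁻¹' {φ w}) w
  have hwX : w ∈ X := mem_connectedComponentIn rfl
  have hXmax : X ⊆ φ ⁻¹' {φ w} := connectedComponentIn_subset _ _
  have hXclosed : IsClosed X := isClosed_of_closure_subset <|
    isPreconnected_connectedComponentIn.closure.subset_connectedComponentIn (subset_closure hwX)
      ((isClosed_singleton.preimage hφ).closure_subset_iff.2 hXmax)
  obtain ⟨v, hv, hsat⟩ := hred.2 X hXclosed ⟨⟨w, hwX⟩, isPreconnected_connectedComponentIn⟩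
    fun h => hv₀ (hXmax h)
  have hvX : v ∈ X := hXclosed.frontier_subset hv
  have hφv : φ v = φ w := hXmax hvX
  have hord := (hdiv v).le_neg_outDeg (hφv ▸ hwmax)
  rw [hφv, ← connectedComponentIn_eq hvX] at hord
  change E v - D v ≤ -(C.outDeg X v : ℤ) at hord
  linarith [hE v]

lemma equivEffective_of_rank_nonneg {D : Divisor C} (hD : 0 ≤ C.rank D) : C.EquivEffective D := by
  set T := {r : ℤ | -1 ≤ r ∧ ∀ E : Divisor C, C.Effective E → C.deg E = r →
    C.EquivEffective (D - E)}
  obtain ⟨r, hrT, hr⟩ : ∃ r ∈ T, 0 ≤ r := by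
    by_cases hbdd : BddAbove T
    · have hT : (-1 : ℤ) ∈ T := ⟨le_rfl, fun E hE hdeg => by
        have : 0 ≤ C.deg E := Finset.sum_nonneg fun v _ => hE v
        omega⟩
      exact ⟨sSup T, Int.csSup_mem ⟨-1, hT⟩ hbdd, hD⟩
    · obtain ⟨r, hrT, hr⟩ := not_bddAbove_iff.1 hbdd 0
      exact ⟨r, hrT, hr.le⟩
  obtain ⟨p⟩ : Nonempty C.Γ := inferInstance
  have hpeff : C.Effective (Finsupp.single p r) := fun v => by
    rw [Finsupp.single_apply]; split <;> omega
  obtain ⟨F, hF, f, hf, hdiv⟩ := hrT.2 _ hpeff (Finsupp.sum_single_index rfl)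
  refine ⟨F + Finsupp.single p r, fun v => add_nonneg (hF v) (hpeff v), f, hf, fun x => ?_⟩
  convert hdiv x using 1
  simp only [Finsupp.coe_add, Finsupp.coe_sub, Pi.add_apply, Pi.sub_apply]
  ring

lemma IsReduced.effective {P : C.Γ} {D D' : Divisor C} (hred : C.IsReduced P D')
    (hlin : C.LinEquiv D' D) (hD : C.EquivEffective D) : C.Effective D' := by
  obtain ⟨E, hE, hlinE⟩ := hD
  obtain ⟨f, hf, hfdiv⟩ := linEquiv_iff.1 hlinE
  obtain ⟨h, hh, hhdiv⟩ := linEquiv_iff.1 hlin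
  intro v
  rcases eq_or_ne v P with rfl | hvP
  · have hφ : C.HasDivisor (-f - h) (E - D') := by
      convert hfdiv.neg.sub hhdiv using 1
      abel
    have hmax := hred.forall_le_of_hasDivisor hE (hf.1.neg.sub hh.1) hφ
    have hord : E v - D' v ≤ 0 := (hφ v).nonpos_of_forall_le hmax
    linarith [hE v]
  · exact hred.1 v hvP

lemma sub_apply_eq_of_isReduced_of_inR {P Q : C.Γ} {D D' : Divisor C} (hP : C.IsReduced P D')
    (hQ : C.IsReduced Q D') (hlin : C.LinEquiv D' D) {f g : C.Γ → ℝ} (hf : C.InR D f)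
    (hg : C.InR D g) : f P - g P = f Q - g Q := by
  obtain ⟨h, hh, hhdiv⟩ := linEquiv_iff.1 hlin
  have key : ∀ f, C.InR D f → f P - h P = f Q - h Q := by
    intro f hf
    obtain ⟨hf, E, hE, hfdiv⟩ := inR_iff.1 hf
    have hφ : C.HasDivisor (f - h) (E - D') := by simpa using hfdiv.sub hhdiv
    exact le_antisymm (hQ.forall_le_of_hasDivisor hE (hf.1.sub hh.1) hφ P)
      (hP.forall_le_of_hasDivisor hE (hf.1.sub hh.1) hφ Q)
  linarith [key f hf, key g hg]

lemma eq_of_isReduced_of_hasDivisor_sub {P Q : C.Γ} {D₁ D₂ : Divisor C}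
    (h₁ : C.IsReduced P D₁) (h₂ : C.IsReduced Q D₂) (he₁ : C.Effective D₁)
    (he₂ : C.Effective D₂) {φ : C.Γ → ℝ} (hφ : Continuous φ) (hdiv : C.HasDivisor φ (D₁ - D₂))
    (hPQ : φ P = φ Q) : D₁ = D₂ := by
  have hle : ∀ y, φ y ≤ φ Q := h₂.forall_le_of_hasDivisor he₁ hφ hdiv
  have hge : ∀ y, (-φ) y ≤ (-φ) P :=
    h₁.forall_le_of_hasDivisor he₂ hφ.neg (neg_sub D₁ D₂ ▸ hdiv.neg)
  have hconst : φ = fun _ => φ P :=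
    funext fun y => le_antisymm (hPQ ▸ hle y) (neg_le_neg_iff.1 (hge y))
  exact sub_eq_zero.1 (hdiv.unique (hconst ▸ C.hasDivisor_const (φ P)))

end TropicalCurve

/-- Let `D` be a divisor of nonnegative rank on a tropical
curve `Γ`. Then `D` is very ample if and only if the reduced-divisor map
`P ↦ D_P` is injective on `Γ`. -/
theorem veryAmple_iff_reduced_divisor_map_injective (C : TropicalCurve)
    (D : TropicalCurve.Divisor C) (hD : 0 ≤ C.rank D)
    (DP : C.Γ → TropicalCurve.Divisor C)
    (hDP : ∀ P : C.Γ, C.IsReduced P (DP P) ∧ C.LinEquiv (DP P) D) :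
    C.VeryAmple D ↔ Function.Injective DP := by
  refine ⟨fun hva P Q hPQ => ?_, fun hinj P Q hPQ => ?_⟩
  · by_contra hne
    obtain ⟨f, g, hf, hg, hsep⟩ := hva P Q hne
    exact hsep (TropicalCurve.sub_apply_eq_of_isReduced_of_inR (hDP P).1 (hPQ ▸ (hDP Q).1)
      (hDP P).2 hf hg)
  · have heff : ∀ R, C.Effective (DP R) := fun R =>
      (hDP R).1.effective (hDP R).2 (C.equivEffective_of_rank_nonneg hD)
    obtain ⟨hp, hpr, hpdiv⟩ := C.linEquiv_iff.1 (hDP P).2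
    obtain ⟨hq, hqr, hqdiv⟩ := C.linEquiv_iff.1 (hDP Q).2
    refine ⟨hp, hq, C.inR_iff.2 ⟨hpr, _, heff P, hpdiv⟩, C.inR_iff.2 ⟨hqr, _, heff Q, hqdiv⟩,
      fun hsep => hPQ (hinj ?_)⟩
    refine TropicalCurve.eq_of_isReduced_of_hasDivisor_sub (hDP P).1 (hDP Q).1 (heff P) (heff Q)
      (hpr.1.sub hqr.1) (by simpa using hpdiv.sub hqdiv) hsep
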